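/- The recursion β_{s+1} = (1 - q^s)·β_s holds, where β_s = Σ_{i=0}^{s} q^{is} binom_q(N-1-s+i, N-1-s); hence β_s = 0 for all 1 ≤ s ≤ N-1 since β_1 = [N]_q = 0. -/

import Mathlib

/-! At a primitive `N`-th root of unity, `[k]_q ≠ 0` for `0 < k < N` while `[N]_q = 0`, so the
q-Pascal rule holds below `N` and every `binom_q(N, j)` vanishes. Applying the Pascal rule to each
term of `β_{s+1}` splits it into two sums which are `β_s` and `q^s β_s` up to boundary terms, and these
cancel except for `binom_q(N, N-1-s)`, which is `0`. The recursion also holds at `s = 0`,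
where its factor `1 - q^0` vanishes, so `β_s = 0` for every `s ≥ 1`. -/

noncomputable section

/-- The q-integer `[k]_q = 1 + q + ... + q^(k-1)`. -/
def qInt (q : ℂ) (k : ℕ) : ℂ := ∑ i ∈ Finset.range k, q ^ i

/-- The q-factorial `[k]_q! = [1]_q [2]_q ⋯ [k]_q`. -/
def qFac (q : ℂ) (k : ℕ) : ℂ := ∏ i ∈ Finset.range k, qInt q (i + 1)

/-- The Gaussian binomial coefficient `binom_q(n, k) = [n]_q! / ([k]_q! [n-k]_q!)`. -/
def qBinom (q : ℂ) (n k : ℕ) : ℂ := qFac q n / (qFac q k * qFac q (n - k))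

/-- `β_s = ∑_{i=0}^{s} q^{is} binom_q(N-1-s+i, N-1-s)`. -/
def betaSum (q : ℂ) (N s : ℕ) : ℂ :=
  ∑ i ∈ Finset.range (s + 1), q ^ (i * s) * qBinom q (N - 1 - s + i) (N - 1 - s)

/-- `∑_{i=0}^{m} q^{is} binom_q(k+i, k)`; `β_s` is the case `k = N-1-s`, `m = s`. -/
def qBinomPowSum (q : ℂ) (k s m : ℕ) : ℂ :=
  ∑ i ∈ Finset.range (m + 1), q ^ (i * s) * qBinom q (k + i) k

section General

variable (q : ℂ)

lemma qInt_add (a b : ℕ) : qInt q (a + b) = qInt q a + q ^ a * qInt q b := by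
  simp [qInt, Finset.sum_range_add, pow_add, Finset.mul_sum]

lemma qFac_succ (n : ℕ) : qFac q (n + 1) = qFac q n * qInt q (n + 1) :=
  Finset.prod_range_succ _ _

lemma qBinomPowSum_succ_right (k s m : ℕ) :
    qBinomPowSum q k s (m + 1) =
      qBinomPowSum q k s m + q ^ ((m + 1) * s) * qBinom q (k + (m + 1)) k :=
  Finset.sum_range_succ _ _

variable {q}

lemma qBinom_self {n : ℕ} (hn : qFac q n ≠ 0) : qBinom q n n = 1 := by
  rw [qBinom, Nat.sub_self, show qFac q 0 = 1 from rfl, mul_one, div_self hn]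

lemma qBinom_succ_succ {n k : ℕ} (hkn : k < n) (hk : qFac q (k + 1) ≠ 0)
    (hnk : qFac q (n - k) ≠ 0) :
    qBinom q (n + 1) (k + 1) = qBinom q n (k + 1) + q ^ (n - k) * qBinom q n k := by
  obtain ⟨j, rfl⟩ : ∃ j, n = k + j + 1 := ⟨n - k - 1, by omega⟩
  have hj : k + j + 1 - k = j + 1 := by omega
  have hj' : k + j + 1 - (k + 1) = j := by omega
  rw [hj] at hnk ⊢
  rw [qFac_succ] at hk hnk
  obtain ⟨hFk, hIk⟩ := mul_ne_zero_iff.1 hk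
  obtain ⟨hFj, hIj⟩ := mul_ne_zero_iff.1 hnk
  have hInt : qInt q (k + j + 1 + 1) = qInt q (j + 1) + q ^ (j + 1) * qInt q (k + 1) := by
    rw [← qInt_add]; ring_nf
  simp only [qBinom, Nat.add_sub_add_right, hj, hj', qFac_succ q (k + j + 1), qFac_succ q k,
    qFac_succ q j, hInt]
  field_simp

end General

section PrimitiveRoot

variable {N : ℕ} {q : ℂ}

lemma qInt_ne_zero (hq : IsPrimitiveRoot q N) {k : ℕ} (hk₀ : k ≠ 0) (hkN : k < N) :
    qInt q k ≠ 0 := by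
  have hq1 : q ≠ 1 := hq.ne_one (by omega)
  rw [qInt, geom_sum_eq hq1]
  exact div_ne_zero (sub_ne_zero.2 (hq.pow_ne_one_of_pos_of_lt hk₀ hkN)) (sub_ne_zero.2 hq1)

lemma qFac_ne_zero (hq : IsPrimitiveRoot q N) {k : ℕ} (hkN : k < N) : qFac q k ≠ 0 :=
  Finset.prod_ne_zero_iff.2 fun i hi =>
    qInt_ne_zero hq i.succ_ne_zero (by have := Finset.mem_range.1 hi; omega)

lemma qBinom_eq_zero (hq : IsPrimitiveRoot q N) (hN : 1 < N) (k : ℕ) : qBinom q N k = 0 := by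
  obtain ⟨m, rfl⟩ : ∃ m, N = m + 1 := ⟨N - 1, by omega⟩
  simp [qBinom, qFac_succ, hq.geom_sum_eq_zero hN, qInt]

lemma qBinomPowSum_succ (hq : IsPrimitiveRoot q N) {k m : ℕ} (hk : k + 1 < N)
    (hm : k + m < N) (s : ℕ) :
    qBinomPowSum q k (s + 1) m =
      (1 - q ^ s) * qBinomPowSum q (k + 1) s m +
        q ^ ((m + 1) * s) * qBinom q (k + 1 + m) (k + 1) := by
  set S : ℕ → ℂ := fun i => q ^ (i * s) * qBinom q (k + 1 + i) (k + 1) with hS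
  have hpascal : ∀ i ∈ Finset.range m,
      q ^ ((i + 1) * (s + 1)) * qBinom q (k + (i + 1)) k = S (i + 1) - q ^ s * S i := by
    intro i hi
    have him := Finset.mem_range.1 hi
    have hP := qBinom_succ_succ (n := k + 1 + i) (k := k) (by omega)
      (qFac_ne_zero hq (by omega)) (qFac_ne_zero hq (by omega))
    rw [show k + 1 + i - k = i + 1 by omega] at hP
    simp only [hS, show k + (i + 1) = k + 1 + i by omega,
      show k + 1 + (i + 1) = k + 1 + i + 1 by omega, hP]
    ring
  have hsum_shift := Finset.sum_range_succ' S m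
  have hsum_last := Finset.sum_range_succ S m
  have hS0 : S 0 = 1 := by simp [hS, qBinom_self (qFac_ne_zero hq hk)]
  have hfirst : q ^ (0 * (s + 1)) * qBinom q (k + 0) k = 1 := by
    simp [qBinom_self (qFac_ne_zero hq (show k < N by omega))]
  rw [qBinomPowSum, Finset.sum_range_succ', Finset.sum_congr rfl hpascal, Finset.sum_sub_distrib,
    ← Finset.mul_sum, hfirst,
    show qBinomPowSum q (k + 1) s m = ∑ i ∈ Finset.range (m + 1), S i from rfl]
  have hSm : q ^ s * S m = q ^ ((m + 1) * s) * qBinom q (k + 1 + m) (k + 1) := by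
    simp only [hS]; ring
  linear_combination -hsum_shift - hS0 + q ^ s * hsum_last + hSm

lemma betaSum_succ (hq : IsPrimitiveRoot q N) {s : ℕ} (hs : s + 2 ≤ N) :
    betaSum q N (s + 1) = (1 - q ^ s) * betaSum q N s := by
  obtain ⟨k, rfl⟩ : ∃ k, N = k + s + 2 := ⟨N - s - 2, by omega⟩
  have hB : qBinom q (k + 1 + (s + 1)) (k + 1) = 0 := by
    rw [show k + 1 + (s + 1) = k + s + 2 by omega]
    exact qBinom_eq_zero hq (by omega) _
  have hsucc : betaSum q (k + s + 2) (s + 1) = qBinomPowSum q k (s + 1) (s + 1) := by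
    simp only [betaSum, qBinomPowSum, show k + s + 2 - 1 - (s + 1) = k by omega]
  have hself : betaSum q (k + s + 2) s = qBinomPowSum q (k + 1) s (s + 1) := by
    rw [qBinomPowSum_succ_right, hB, mul_zero, add_zero]
    simp only [betaSum, qBinomPowSum, show k + s + 2 - 1 - s = k + 1 by omega]
  rw [hsucc, hself, qBinomPowSum_succ hq (by omega) (by omega), hB, mul_zero, add_zero]

lemma betaSum_eq_zero (hq : IsPrimitiveRoot q N) {s : ℕ} (hs : 1 ≤ s) (hsN : s ≤ N - 1) :
    betaSum q N s = 0 := by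
  induction s with
  | zero => omega
  | succ t ih =>
    rw [betaSum_succ hq (by omega)]
    rcases Nat.eq_zero_or_pos t with rfl | ht
    · simp
    · rw [ih ht (by omega), mul_zero]

end PrimitiveRoot

theorem betaSum_recursion_and_vanishing_general (N : ℕ) (q : ℂ)
    (hq : IsPrimitiveRoot q N) :
    (∀ s : ℕ, 1 ≤ s → s ≤ N - 2 → betaSum q N (s + 1) = (1 - q ^ s) * betaSum q N s) ∧
      (∀ s : ℕ, 1 ≤ s → s ≤ N - 1 → betaSum q N s = 0) :=
  ⟨fun _ hs hsN => betaSum_succ hq (by omega), fun _ hs hsN => betaSum_eq_zero hq hs hsN⟩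

/-- The recursion `β_{s+1} = (1 - q^s) β_s` holds, hence `β_s = 0` for `1 ≤ s ≤ N-1`
since `β_1 = [N]_q = 0`. -/
theorem betaSum_recursion_and_vanishing (N : ℕ) (hN : N.Prime) (q : ℂ)
    (hq : IsPrimitiveRoot q N) :
    (∀ s : ℕ, 1 ≤ s → s ≤ N - 2 → betaSum q N (s + 1) = (1 - q ^ s) * betaSum q N s) ∧
      (∀ s : ℕ, 1 ≤ s → s ≤ N - 1 → betaSum q N s = 0) :=
  betaSum_recursion_and_vanishing_general N q hq
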